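/- Let (j₁,k₁),…,(jₙ,kₙ) be pairwise distinct pairs with 1 ≤ j_m ≤ n and 0 ≤ k_m ≤ r, and suppose there exist p ≠ q with j_p = j_q. Then the Gaudin function vanishes under the corresponding specialization of the x-variables: F^r_n( (t^{k₁} y_{j₁}, …, t^{kₙ} y_{jₙ}), y ) = 0. -/

import Mathlib

noncomputable section

open scoped BigOperators

namespace Gaudin

variable {R : Type*} [CommRing R]

/-- The generating series `∏_{b∈B}(1-zb) / ∏_{a∈A}(1-za)` of the complete
functions of the formal difference of alphabets `A - B` (the inverse is taken
via `PowerSeries.invOfUnit`, legitimate since the constant coefficient is `1`). -/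
def genSeries (A B : Multiset R) : PowerSeries R :=
  (B.map (fun b => 1 - PowerSeries.C b * PowerSeries.X)).prod *
    PowerSeries.invOfUnit ((A.map (fun a => 1 - PowerSeries.C a * PowerSeries.X)).prod) 1

/-- The complete function `S_m(A-B)`: the coefficient of `z^m` in the generating
series, and `0` for `m < 0`. -/
def Scomp (A B : Multiset R) (m : ℤ) : R :=
  if m < 0 then 0 else PowerSeries.coeff m.toNat (genSeries A B)

/-- The Schur function of index `v ∈ ℕ^p` of the difference of alphabets `A - B`:
`S_v(A-B) = det( S_{v_c + c - ρ}(A-B) )_{ρ,c = 1,…,p}`. -/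
def SchurS {p : ℕ} (A B : Multiset R) (v : Fin p → ℕ) : R :=
  Matrix.det (Matrix.of fun ρ c : Fin p => Scomp A B ((v c : ℤ) + (c : ℤ) - (ρ : ℤ)))

/-- The Vandermonde `Δ(x) = ∏_{i<j} (x_j - x_i)`. -/
def vand {n : ℕ} (x : Fin n → R) : R :=
  ∏ i : Fin n, ∏ j ∈ Finset.Ioi i, (x j - x i)

variable {K : Type*} [Field K]

/-- The Gaudin function of level `r`:
`F^r_n(x,y) = (R(x, y(1+t+⋯+t^r)) / (Δ(x)Δ(y))) · det(1/∏_{k=0}^r (x_i - t^k y_j))`. -/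
def gaudinF (n r : ℕ) (t : K) (x y : Fin n → K) : K :=
  ((∏ i : Fin n, ∏ j : Fin n, ∏ k ∈ Finset.range (r + 1), (x i - t ^ k * y j)) /
      (vand x * vand y)) *
    Matrix.det (Matrix.of fun i j : Fin n =>
      (∏ k ∈ Finset.range (r + 1), (x i - t ^ k * y j))⁻¹)

/-- The alphabet `y(1+t+⋯+t^r) = {y, ty, …, t^r y}` attached to a single letter `y`. -/
def alph1t (r : ℕ) (t yi : K) : Multiset K :=
  (Finset.univ : Finset (Fin (r + 1))).val.map fun k => t ^ (k : ℕ) * yi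

/-- The alphabet (multiset) attached to a finite family of letters. -/
def alphOf {n : ℕ} (x : Fin n → K) : Multiset K :=
  (Finset.univ : Finset (Fin n)).val.map x

/-- The ordinary Schur polynomial `s_λ(x₁,…,xₙ)` in bialternant form. -/
def schurPol {n : ℕ} (lam : Fin n → ℕ) (x : Fin n → K) : K :=
  Matrix.det (Matrix.of fun i j : Fin n => x i ^ (lam j + (n - 1 - (j : ℕ)))) /
    Matrix.det (Matrix.of fun i j : Fin n => x i ^ (n - 1 - (j : ℕ)))

/-- Substitution of variables in a rational function, computed on the reduced
fraction (numerator/denominator), with the usual junk-value convention if the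
denominator specializes to zero. -/
def subst {σ : Type*} (g : σ → FractionRing (MvPolynomial σ ℚ))
    (f : FractionRing (MvPolynomial σ ℚ)) : FractionRing (MvPolynomial σ ℚ) :=
  MvPolynomial.aeval g (IsFractionRing.num (MvPolynomial σ ℚ) f) /
    MvPolynomial.aeval g ((IsFractionRing.den (MvPolynomial σ ℚ) f : MvPolynomial σ ℚ))

/-- Variable indices for the field `ℚ(t, x₁,…,xₙ, y₁,…,yₙ)`. -/
abbrev Vars (n : ℕ) := Unit ⊕ Fin n ⊕ Fin n

/-- The field `ℚ(t, x₁,…,xₙ, y₁,…,yₙ)`. -/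
abbrev Kn (n : ℕ) := FractionRing (MvPolynomial (Vars n) ℚ)

/-- The indeterminate `t`. -/
def tv (n : ℕ) : Kn n :=
  algebraMap (MvPolynomial (Vars n) ℚ) (Kn n) (MvPolynomial.X (Sum.inl ()))

/-- The indeterminates `x₁,…,xₙ`. -/
def xv {n : ℕ} (i : Fin n) : Kn n :=
  algebraMap (MvPolynomial (Vars n) ℚ) (Kn n) (MvPolynomial.X (Sum.inr (Sum.inl i)))

/-- The indeterminates `y₁,…,yₙ`. -/
def yv {n : ℕ} (j : Fin n) : Kn n :=
  algebraMap (MvPolynomial (Vars n) ℚ) (Kn n) (MvPolynomial.X (Sum.inr (Sum.inr j)))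

/-!
Clearing the denominators and expanding the determinant gives the polynomial identity
`F · Δ(x) Δ(y) = ∑_σ sgn σ ∏_j ∏_{i ≠ σ j} R(x_i, y_j(1+⋯+t^r))`, which survives any
specialization. After `x_m ↦ t^{k_m} y_{j_m}` the `σ`-term contains the vanishing factor
`x_m - t^{k_m} y_{j_m}` as soon as `σ (j_m) ≠ m` for some `m`; otherwise `σ` would be a left
inverse of `m ↦ j_m`, which is not injective since `j_p = j_q`. The specialized Vandermondes
do not vanish because the pairs `(j_m, k_m)` are distinct, so the specialized `F` is zero.
-/

open Function Finset MvPolynomial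

/-- `R(a, b(1+t+⋯+t^r))` in the notation of the statement. -/
def tResultant (r : ℕ) (t a b : R) : R :=
  ∏ k ∈ range (r + 1), (a - t ^ k * b)

def gaudinNum (n r : ℕ) (t : R) (x y : Fin n → R) : R :=
  ∑ σ : Equiv.Perm (Fin n), (Equiv.Perm.sign σ : ℤ) •
    ∏ j, ∏ i ∈ univ.erase (σ j), tResultant r t (x i) (y j)

section RingHom

variable {S F : Type*} [CommRing S] [FunLike F R S] [RingHomClass F R S]

theorem map_vand (f : F) {n : ℕ} (x : Fin n → R) : f (vand x) = vand fun i => f (x i) := by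
  simp only [vand, map_prod, map_sub]

theorem map_tResultant (f : F) (r : ℕ) (t a b : R) :
    f (tResultant r t a b) = tResultant r (f t) (f a) (f b) := by
  simp only [tResultant, map_prod, map_sub, map_mul, map_pow]

theorem map_gaudinNum (f : F) (n r : ℕ) (t : R) (x y : Fin n → R) :
    f (gaudinNum n r t x y) = gaudinNum n r (f t) (fun i => f (x i)) fun j => f (y j) := by
  simp only [gaudinNum, map_sum, map_zsmul, map_prod, map_tResultant]

end RingHom

theorem vand_ne_zero [IsDomain R] {n : ℕ} {x : Fin n → R} (hx : Injective x) : vand x ≠ 0 := by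
  rw [vand, ← Matrix.det_vandermonde]
  exact Matrix.det_vandermonde_ne_zero_iff.2 hx

theorem tResultant_pow_mul_self_eq_zero {r k : ℕ} (hk : k ≤ r) (t b : R) :
    tResultant r t (t ^ k * b) b = 0 :=
  prod_eq_zero (mem_range.2 (Nat.lt_succ_of_le hk)) (sub_self _)

theorem exists_perm_apply_ne_of_not_injective {n : ℕ} {j : Fin n → Fin n} (hj : ¬Injective j)
    (σ : Equiv.Perm (Fin n)) : ∃ m, σ (j m) ≠ m := by
  by_contra! h
  exact hj (LeftInverse.injective (g := σ) h)

theorem gaudinNum_specialize_eq_zero {n r : ℕ} (t : R) (y : Fin n → R) {j : Fin n → Fin n}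
    (hj : ¬Injective j) {k : Fin n → ℕ} (hk : ∀ m, k m ≤ r) :
    gaudinNum n r t (fun m => t ^ k m * y (j m)) y = 0 := by
  refine sum_eq_zero fun σ _ => ?_
  obtain ⟨m, hm⟩ := exists_perm_apply_ne_of_not_injective hj σ
  rw [prod_eq_zero (mem_univ (j m)) (prod_eq_zero (mem_erase.2 ⟨hm.symm, mem_univ m⟩)
    (tResultant_pow_mul_self_eq_zero (hk m) t (y (j m)))), smul_zero]

theorem prod_mul_det_inv {n : ℕ} {D : Fin n → Fin n → K} (hD : ∀ i j, D i j ≠ 0) :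
    (∏ i, ∏ j, D i j) * (Matrix.of fun i j => (D i j)⁻¹).det =
      ∑ σ : Equiv.Perm (Fin n), (Equiv.Perm.sign σ : ℤ) • ∏ j, ∏ i ∈ univ.erase (σ j), D i j := by
  rw [Matrix.det_apply, mul_sum, prod_comm]
  refine sum_congr rfl fun σ _ => ?_
  rw [mul_smul_comm, ← prod_mul_distrib]
  refine congrArg _ (prod_congr rfl fun j _ => ?_)
  rw [Matrix.of_apply, ← mul_prod_erase univ (D · j) (mem_univ (σ j)), mul_right_comm,
    mul_inv_cancel₀ (hD _ _), one_mul]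

theorem gaudinF_mul_vand {n r : ℕ} {t : K} {x y : Fin n → K}
    (hxy : ∀ i j, tResultant r t (x i) (y j) ≠ 0) (hv : vand x * vand y ≠ 0) :
    gaudinF n r t x y * (vand x * vand y) = gaudinNum n r t x y := by
  rw [gaudinF, mul_right_comm, div_mul_cancel₀ _ hv]
  exact prod_mul_det_inv hxy

section Indeterminates

variable {n : ℕ}

theorem algebraMap_injective_Kn : Injective (algebraMap (MvPolynomial (Vars n) ℚ) (Kn n)) :=
  IsFractionRing.injective _ _

theorem xv_injective : Injective (xv (n := n)) := fun _ _ h => by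
  simpa using X_injective (algebraMap_injective_Kn h)

theorem yv_injective : Injective (yv (n := n)) := fun _ _ h => by
  simpa using X_injective (algebraMap_injective_Kn h)

theorem tv_pow_mul_yv_injective : Injective fun e : ℕ × Fin n => tv n ^ e.1 * yv e.2 := by
  rintro ⟨a, b⟩ ⟨a', b'⟩ h
  have hpoly : (X (Sum.inl ()) ^ a * X (Sum.inr (Sum.inr b)) : MvPolynomial (Vars n) ℚ) =
      X (Sum.inl ()) ^ a' * X (Sum.inr (Sum.inr b')) :=
    algebraMap_injective_Kn (by simpa [tv, yv] using h)
  rw [X_pow_eq_monomial, X_pow_eq_monomial, X, X, monomial_mul, monomial_mul,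
    mul_one, monomial_left_inj one_ne_zero] at hpoly
  have ha := DFunLike.congr_fun hpoly (Sum.inl ())
  have hb := DFunLike.congr_fun hpoly (Sum.inr (Sum.inr b))
  simp only [Finsupp.coe_add, Pi.add_apply, Finsupp.single_apply, reduceCtorEq, Sum.inr.injEq,
    if_true, if_false, add_zero, zero_add, left_eq_ite_iff, one_ne_zero, imp_false,
    Decidable.not_not] at ha hb
  exact Prod.ext ha hb.symm

theorem tResultant_xv_yv_ne_zero (r : ℕ) (i j : Fin n) :
    tResultant r (tv n) (xv i) (yv j) ≠ 0 := by
  refine prod_ne_zero_iff.2 fun k _ h => ?_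
  have hpoly : (X (Sum.inr (Sum.inl i)) - X (Sum.inl ()) ^ k * X (Sum.inr (Sum.inr j)) :
      MvPolynomial (Vars n) ℚ) = 0 := by
    apply algebraMap_injective_Kn
    simpa [xv, tv, yv] using h
  simpa using
    congrArg (MvPolynomial.eval fun v => if v = Sum.inr (Sum.inl i) then (1 : ℚ) else 0) hpoly

end Indeterminates

theorem mul_vand_eq_gaudinNum {n r : ℕ} {P : MvPolynomial (Vars n) ℚ}
    (hP : algebraMap (MvPolynomial (Vars n) ℚ) (Kn n) P = gaudinF n r (tv n) xv yv) :
    P * (vand (fun i => X (Sum.inr (Sum.inl i))) * vand fun j => X (Sum.inr (Sum.inr j))) =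
      gaudinNum n r (X (Sum.inl ())) (fun i => X (Sum.inr (Sum.inl i)))
        fun j => X (Sum.inr (Sum.inr j)) := by
  apply algebraMap_injective_Kn
  rw [map_mul, map_mul, hP, map_vand, map_vand, map_gaudinNum]
  exact gaudinF_mul_vand (tResultant_xv_yv_ne_zero r)
    (mul_ne_zero (vand_ne_zero xv_injective) (vand_ne_zero yv_injective))

theorem aeval_eq_zero_of_gaudinNum_eq_zero {n r : ℕ} {P : MvPolynomial (Vars n) ℚ}
    (hP : algebraMap (MvPolynomial (Vars n) ℚ) (Kn n) P = gaudinF n r (tv n) xv yv)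
    {A : Type*} [CommRing A] [NoZeroDivisors A] [Algebra ℚ A] {g : Vars n → A}
    (hx : vand (fun i => g (Sum.inr (Sum.inl i))) ≠ 0)
    (hy : vand (fun j => g (Sum.inr (Sum.inr j))) ≠ 0)
    (hnum : gaudinNum n r (g (Sum.inl ())) (fun i => g (Sum.inr (Sum.inl i)))
      (fun j => g (Sum.inr (Sum.inr j))) = 0) :
    aeval g P = 0 := by
  have hspec := congrArg (aeval g) (mul_vand_eq_gaudinNum hP)
  simp only [map_mul, map_vand, map_gaudinNum, aeval_X] at hspec
  exact (mul_eq_zero.1 (hspec.trans hnum)).resolve_right (mul_ne_zero hx hy)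

theorem gaudin_vanishes_on_repeated_y (n r : ℕ)
    (P : MvPolynomial (Vars n) ℚ)
    (hP : algebraMap (MvPolynomial (Vars n) ℚ) (Kn n) P = gaudinF n r (tv n) xv yv)
    (jk : Fin n → Fin n × Fin (r + 1)) (hjk : Function.Injective jk)
    (p q : Fin n) (hpq : p ≠ q) (hsame : (jk p).1 = (jk q).1) :
    MvPolynomial.aeval (fun v : Vars n => match v with
      | Sum.inl () => tv n
      | Sum.inr (Sum.inl m) => tv n ^ ((jk m).2 : ℕ) * yv (jk m).1
      | Sum.inr (Sum.inr j) => yv j) P = 0 := by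
  have hx : Injective fun m => tv n ^ ((jk m).2 : ℕ) * yv (jk m).1 :=
    tv_pow_mul_yv_injective.comp (f := fun m => (((jk m).2 : ℕ), (jk m).1)) fun a b h =>
      hjk (Prod.ext (congrArg Prod.snd h) (Fin.ext (congrArg Prod.fst h)))
  have hj : ¬Injective fun m => (jk m).1 := fun h => hpq (h hsame)
  refine aeval_eq_zero_of_gaudinNum_eq_zero hP ?_ ?_ ?_
  · exact vand_ne_zero hx
  · exact vand_ne_zero yv_injective
  · exact gaudinNum_specialize_eq_zero (tv n) yv hj fun m => (jk m).2.is_le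

end Gaudin
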